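/- arXiv:2304.11334 — 6 statements merged into one kernel-verified Lean document; each statement's English description precedes it below -/
import Mathlib

section
/- Fix a real number c with 0 < c < 1, and define Q: [0,3-2c] × ℝ_{≥0} → ℝ as follows. For 0 ≤ u ≤ 1: Q(u,v) = 8c^2 + 4cu - v^2 - 20c - 4u + 12 if 0 ≤ v ≤ 2-2c; Q(u,v) = 4(1-c)(4-3c-u-v) if 2-2c ≤ v ≤ 3-2c-u; Q(u,v) = (5-4c-u-v)^2 if 3-2c-u ≤ v ≤ 5-4c-u. For 1 ≤ u ≤ 3-2c: Q(u,v) = 8c^2 + 4cu - v^2 - 20c - 4u + 12 if 0 ≤ v ≤ 3-2c-u; Q(u,v) = (3-2c-u)(7-6c-u-2v) if 3-2c-u ≤ v ≤ 2-2c; Q(u,v) = (5-4c-u-v)^2 if 2-2c ≤ v ≤ 5-4c-u. Then (3/(6(1-c)(3-2c)^2)) * ∫_0^{3-2c} ∫_0^{5-4c-u} Q(u,v) dv du = (6-5c)/3. -/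
open MeasureTheory Set

/-! On every slice `u` the integrand is piecewise quadratic in `v`, so the inner integral is computed
piece by piece; on both ranges of `u` it comes out as the same quadratic polynomial in `u`, whose
integral over `[0, 3 - 2c]` is `(6 - 5c)(1 - c)(3 - 2c)^2 · 2/3`. -/

noncomputable def quadPrimitive (α β γ x : ℝ) : ℝ := α * x + β * x ^ 2 / 2 + γ * x ^ 3 / 3

lemma hasDerivAt_quadPrimitive (α β γ x : ℝ) :
    HasDerivAt (quadPrimitive α β γ) (α + β * x + γ * x ^ 2) x := by
  refine ((((hasDerivAt_id' x).const_mul α).add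
    (((hasDerivAt_pow 2 x).const_mul β).div_const 2)).add
    (((hasDerivAt_pow 3 x).const_mul γ).div_const 3)).congr_deriv ?_
  norm_num
  ring

lemma intervalIntegral_eq_of_eqOn_quadratic {f : ℝ → ℝ} {a b : ℝ} (α β γ : ℝ) (hab : a ≤ b)
    (hf : ∀ x, a ≤ x → x ≤ b → f x = α + β * x + γ * x ^ 2) :
    IntervalIntegrable f volume a b ∧
      ∫ x in a..b, f x = quadPrimitive α β γ b - quadPrimitive α β γ a := by
  have heq : EqOn f (fun x => α + β * x + γ * x ^ 2) (uIcc a b) := by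
    intro x hx
    rw [uIcc_of_le hab] at hx
    exact hf x hx.1 hx.2
  have hcont : Continuous fun x : ℝ => α + β * x + γ * x ^ 2 := by fun_prop
  refine ⟨(hcont.continuousOn.congr heq).intervalIntegrable, ?_⟩
  rw [intervalIntegral.integral_congr heq]
  exact intervalIntegral.integral_eq_sub_of_hasDerivAt
    (fun x _ => hasDerivAt_quadPrimitive α β γ x) (hcont.intervalIntegrable a b)

lemma intervalIntegral_eq_of_three_quadratic_pieces {f : ℝ → ℝ} {a₀ a₁ a₂ a₃ : ℝ}
    (α₁ β₁ γ₁ α₂ β₂ γ₂ α₃ β₃ γ₃ : ℝ) (h₁ : a₀ ≤ a₁) (h₂ : a₁ ≤ a₂) (h₃ : a₂ ≤ a₃)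
    (hf₁ : ∀ x, a₀ ≤ x → x ≤ a₁ → f x = α₁ + β₁ * x + γ₁ * x ^ 2)
    (hf₂ : ∀ x, a₁ ≤ x → x ≤ a₂ → f x = α₂ + β₂ * x + γ₂ * x ^ 2)
    (hf₃ : ∀ x, a₂ ≤ x → x ≤ a₃ → f x = α₃ + β₃ * x + γ₃ * x ^ 2) :
    ∫ x in a₀..a₃, f x =
      (quadPrimitive α₁ β₁ γ₁ a₁ - quadPrimitive α₁ β₁ γ₁ a₀) +
      (quadPrimitive α₂ β₂ γ₂ a₂ - quadPrimitive α₂ β₂ γ₂ a₁) +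
      (quadPrimitive α₃ β₃ γ₃ a₃ - quadPrimitive α₃ β₃ γ₃ a₂) := by
  obtain ⟨i₁, e₁⟩ := intervalIntegral_eq_of_eqOn_quadratic α₁ β₁ γ₁ h₁ hf₁
  obtain ⟨i₂, e₂⟩ := intervalIntegral_eq_of_eqOn_quadratic α₂ β₂ γ₂ h₂ hf₂
  obtain ⟨i₃, e₃⟩ := intervalIntegral_eq_of_eqOn_quadratic α₃ β₃ γ₃ h₃ hf₃
  rw [← intervalIntegral.integral_add_adjacent_intervals (i₁.trans i₂) i₃,
    ← intervalIntegral.integral_add_adjacent_intervals i₁ i₂, e₁, e₂, e₃]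

/-- The common value of `∫ v in 0..5 - 4c - u, Q u v` on both ranges of `u`. -/
def sliceIntegral (c u : ℝ) : ℝ :=
  (30 - 74*c + 60*c^2 - 16*c^3) + (-16 + 28*c - 12*c^2) * u + (2 - 2*c) * u^2

section Slices

variable {c u : ℝ} {q : ℝ → ℝ}

lemma integral_slice_of_le_one (hc1 : c < 1) (hu1 : u ≤ 1)
    (hq1 : ∀ v, 0 ≤ v → v ≤ 2 - 2*c → q v = 8*c^2 + 4*c*u - v^2 - 20*c - 4*u + 12)
    (hq2 : ∀ v, 2 - 2*c ≤ v → v ≤ 3 - 2*c - u → q v = 4 * (1 - c) * (4 - 3*c - u - v))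
    (hq3 : ∀ v, 3 - 2*c - u ≤ v → v ≤ 5 - 4*c - u → q v = (5 - 4*c - u - v)^2) :
    ∫ v in (0:ℝ)..(5 - 4*c - u), q v =
      sliceIntegral c u := by
  rw [intervalIntegral_eq_of_three_quadratic_pieces (a₁ := 2 - 2*c) (a₂ := 3 - 2*c - u)
    (8*c^2 + 4*c*u - 20*c - 4*u + 12) 0 (-1)
    (4 * (1 - c) * (4 - 3*c - u)) (-(4 * (1 - c))) 0
    ((5 - 4*c - u)^2) (-(2 * (5 - 4*c - u))) 1
    (by linarith) (by linarith) (by linarith)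
    (fun v h h' => by rw [hq1 v h h']; ring)
    (fun v h h' => by rw [hq2 v h h']; ring)
    (fun v h h' => by rw [hq3 v h h']; ring)]
  simp only [quadPrimitive, sliceIntegral]
  ring

lemma integral_slice_of_one_le (hu1 : 1 ≤ u) (hu3 : u ≤ 3 - 2*c)
    (hq1 : ∀ v, 0 ≤ v → v ≤ 3 - 2*c - u → q v = 8*c^2 + 4*c*u - v^2 - 20*c - 4*u + 12)
    (hq2 : ∀ v, 3 - 2*c - u ≤ v → v ≤ 2 - 2*c → q v = (3 - 2*c - u) * (7 - 6*c - u - 2*v))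
    (hq3 : ∀ v, 2 - 2*c ≤ v → v ≤ 5 - 4*c - u → q v = (5 - 4*c - u - v)^2) :
    ∫ v in (0:ℝ)..(5 - 4*c - u), q v = sliceIntegral c u := by
  rw [intervalIntegral_eq_of_three_quadratic_pieces (a₁ := 3 - 2*c - u) (a₂ := 2 - 2*c)
    (8*c^2 + 4*c*u - 20*c - 4*u + 12) 0 (-1)
    ((3 - 2*c - u) * (7 - 6*c - u)) (-(2 * (3 - 2*c - u))) 0
    ((5 - 4*c - u)^2) (-(2 * (5 - 4*c - u))) 1
    (by linarith) (by linarith) (by linarith)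
    (fun v h h' => by rw [hq1 v h h']; ring)
    (fun v h h' => by rw [hq2 v h h']; ring)
    (fun v h h' => by rw [hq3 v h h']; ring)]
  simp only [quadPrimitive, sliceIntegral]
  ring

end Slices
theorem stmt_3_general (c : ℝ) (hc1 : c < 1) (Q : ℝ → ℝ → ℝ)
    (hQ1 : ∀ u v, 0 ≤ u → u ≤ 1 → 0 ≤ v → v ≤ 2 - 2*c →
      Q u v = 8*c^2 + 4*c*u - v^2 - 20*c - 4*u + 12)
    (hQ2 : ∀ u v, 0 ≤ u → u ≤ 1 → 2 - 2*c ≤ v → v ≤ 3 - 2*c - u →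
      Q u v = 4 * (1 - c) * (4 - 3*c - u - v))
    (hQ3 : ∀ u v, 0 ≤ u → u ≤ 1 → 3 - 2*c - u ≤ v → v ≤ 5 - 4*c - u →
      Q u v = (5 - 4*c - u - v)^2)
    (hQ4 : ∀ u v, 1 ≤ u → u ≤ 3 - 2*c → 0 ≤ v → v ≤ 3 - 2*c - u →
      Q u v = 8*c^2 + 4*c*u - v^2 - 20*c - 4*u + 12)
    (hQ5 : ∀ u v, 1 ≤ u → u ≤ 3 - 2*c → 3 - 2*c - u ≤ v → v ≤ 2 - 2*c →
      Q u v = (3 - 2*c - u) * (7 - 6*c - u - 2*v))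
    (hQ6 : ∀ u v, 1 ≤ u → u ≤ 3 - 2*c → 2 - 2*c ≤ v → v ≤ 5 - 4*c - u →
      Q u v = (5 - 4*c - u - v)^2) :
    (3 / (6 * (1 - c) * (3 - 2*c)^2)) *
      (∫ u in (0:ℝ)..(3 - 2*c), ∫ v in (0:ℝ)..(5 - 4*c - u), Q u v) =
    (6 - 5*c) / 3 := by
  have hslice : ∀ u, 0 ≤ u → u ≤ 3 - 2*c →
      ∫ v in (0:ℝ)..(5 - 4*c - u), Q u v = sliceIntegral c u := by
    intro u hu0 hu3
    rcases le_total u 1 with hu1 | hu1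
    · exact integral_slice_of_le_one hc1 hu1 (hQ1 u · hu0 hu1) (hQ2 u · hu0 hu1) (hQ3 u · hu0 hu1)
    · exact integral_slice_of_one_le hu1 hu3 (hQ4 u · hu1 hu3) (hQ5 u · hu1 hu3)
        (hQ6 u · hu1 hu3)
  obtain ⟨-, houter⟩ := intervalIntegral_eq_of_eqOn_quadratic
    (30 - 74*c + 60*c^2 - 16*c^3) (-16 + 28*c - 12*c^2) (2 - 2*c) (by linarith) hslice
  have h1c : 0 < 1 - c := by linarith
  have h32c : 0 < 3 - 2*c := by linarith
  rw [houter, div_mul_eq_mul_div, div_eq_div_iff (by positivity) three_ne_zero]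
  simp only [quadPrimitive]
  ring

theorem stmt_3 (c : ℝ) (hc0 : 0 < c) (hc1 : c < 1) (Q : ℝ → ℝ → ℝ)
    (hQ1 : ∀ u v, 0 ≤ u → u ≤ 1 → 0 ≤ v → v ≤ 2 - 2*c →
      Q u v = 8*c^2 + 4*c*u - v^2 - 20*c - 4*u + 12)
    (hQ2 : ∀ u v, 0 ≤ u → u ≤ 1 → 2 - 2*c ≤ v → v ≤ 3 - 2*c - u →
      Q u v = 4 * (1 - c) * (4 - 3*c - u - v))
    (hQ3 : ∀ u v, 0 ≤ u → u ≤ 1 → 3 - 2*c - u ≤ v → v ≤ 5 - 4*c - u →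
      Q u v = (5 - 4*c - u - v)^2)
    (hQ4 : ∀ u v, 1 ≤ u → u ≤ 3 - 2*c → 0 ≤ v → v ≤ 3 - 2*c - u →
      Q u v = 8*c^2 + 4*c*u - v^2 - 20*c - 4*u + 12)
    (hQ5 : ∀ u v, 1 ≤ u → u ≤ 3 - 2*c → 3 - 2*c - u ≤ v → v ≤ 2 - 2*c →
      Q u v = (3 - 2*c - u) * (7 - 6*c - u - 2*v))
    (hQ6 : ∀ u v, 1 ≤ u → u ≤ 3 - 2*c → 2 - 2*c ≤ v → v ≤ 5 - 4*c - u →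
      Q u v = (5 - 4*c - u - v)^2) :
    (3 / (6 * (1 - c) * (3 - 2*c)^2)) *
      (∫ u in (0:ℝ)..(3 - 2*c), ∫ v in (0:ℝ)..(5 - 4*c - u), Q u v) =
    (6 - 5*c) / 3 :=
  stmt_3_general c hc1 Q hQ1 hQ2 hQ3 hQ4 hQ5 hQ6
end

section
/- Fix a real number c with 0 < c < 1, and define g: [0,3-2c] × ℝ_{≥0} → ℝ as follows. For 0 ≤ u ≤ 1: g(u,v) = v if 0 ≤ v ≤ 2-2c; g(u,v) = 2-2c if 2-2c ≤ v ≤ 3-2c-u; g(u,v) = 5-4c-u-v if 3-2c-u ≤ v ≤ 5-4c-u. For 1 ≤ u ≤ 3-2c: g(u,v) = v if 0 ≤ v ≤ 3-2c-u; g(u,v) = 3-2c-u if 3-2c-u ≤ v ≤ 2-2c; g(u,v) = 5-4c-u-v if 2-2c ≤ v ≤ 5-4c-u. Then (3/(6(1-c)(3-2c)^2)) * ∫_0^{3-2c} ∫_0^{5-4c-u} g(u,v)^2 dv du = 1 - c - 2(5-3c)(1-c)^2/(3(3-2c)^2). -/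
/-!
For fixed `u`, `v ↦ g u v` is a trapezoid: it rises with slope one to height `m`, stays flat up
to `M` and falls back to zero at `m + M`, with `(m, M) = (2 - 2c, 3 - 2c - u)` for `u ≤ 1` and
`(m, M) = (3 - 2c - u, 2 - 2c)` for `u ≥ 1`. The square of such a profile integrates to
`2m³/3 + m²(M - m)`; integrating this in `u` gives `k⁴/4 + 2k³/3 + k²/2` with `k = 2 - 2c`, and
what remains is an identity of rational functions of `c`.
-/

open MeasureTheory Set intervalIntegral

lemma intervalIntegrable_of_eqOn_Icc {f p : ℝ → ℝ} {a b : ℝ} (hab : a ≤ b) (hp : Continuous p)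
    (h : EqOn f p (Icc a b)) : IntervalIntegrable f volume a b :=
  (intervalIntegrable_congr (h.mono (by simp [uIoc_of_le hab, Ioc_subset_Icc_self]))).mpr
    (hp.intervalIntegrable a b)

lemma integral_eq_of_eqOn_Icc {f p : ℝ → ℝ} {a b : ℝ} (hab : a ≤ b) (h : EqOn f p (Icc a b)) :
    ∫ x in a..b, f x = ∫ x in a..b, p x :=
  integral_congr (by rwa [uIcc_of_le hab])

lemma integral_eq_add_of_eqOn_Icc {f p q : ℝ → ℝ} {a b c : ℝ} (hab : a ≤ b) (hbc : b ≤ c)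
    (hp : Continuous p) (hq : Continuous q) (hfp : EqOn f p (Icc a b)) (hfq : EqOn f q (Icc b c)) :
    ∫ x in a..c, f x = (∫ x in a..b, p x) + ∫ x in b..c, q x := by
  rw [← integral_add_adjacent_intervals (intervalIntegrable_of_eqOn_Icc hab hp hfp)
    (intervalIntegrable_of_eqOn_Icc hbc hq hfq), integral_eq_of_eqOn_Icc hab hfp,
    integral_eq_of_eqOn_Icc hbc hfq]

def IsTrapezoid (f : ℝ → ℝ) (m M : ℝ) : Prop :=
  EqOn f id (Icc 0 m) ∧ EqOn f (fun _ => m) (Icc m M) ∧ EqOn f (fun v => m + M - v) (Icc M (m + M))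

lemma IsTrapezoid.integral_sq {f : ℝ → ℝ} {m M : ℝ} (hf : IsTrapezoid f m M) (hm : 0 ≤ m)
    (hmM : m ≤ M) : ∫ v in 0..m + M, f v ^ 2 = 2 * m ^ 3 / 3 + m ^ 2 * (M - m) := by
  obtain ⟨h₁, h₂, h₃⟩ := hf
  have sq {p : ℝ → ℝ} {s : Set ℝ} (h : EqOn f p s) : EqOn (f · ^ 2) (p · ^ 2) s :=
    fun v hv => by simp only [h hv]
  rw [← integral_add_adjacent_intervals (intervalIntegrable_of_eqOn_Icc hm (by fun_prop) (sq h₁))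
      ((intervalIntegrable_of_eqOn_Icc hmM (by fun_prop) (sq h₂)).trans
        (intervalIntegrable_of_eqOn_Icc (by linarith) (by fun_prop) (sq h₃))),
    integral_eq_of_eqOn_Icc hm (sq h₁),
    integral_eq_add_of_eqOn_Icc hmM (by linarith) (by fun_prop) (by fun_prop) (sq h₂) (sq h₃),
    integral_comp_sub_left (· ^ 2)]
  simp only [id, integral_pow, intervalIntegral.integral_const, smul_eq_mul]
  ring_nf

lemma integral_integral_sq_of_isTrapezoid {k : ℝ} (hk : 0 ≤ k) {g : ℝ → ℝ → ℝ}
    (h₁ : ∀ u ∈ Icc 0 1, IsTrapezoid (g u) k (k + 1 - u))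
    (h₂ : ∀ u ∈ Icc 1 (k + 1), IsTrapezoid (g u) (k + 1 - u) k) :
    ∫ u in 0..k + 1, ∫ v in 0..2 * k + 1 - u, g u v ^ 2 = k ^ 4 / 4 + 2 * k ^ 3 / 3 + k ^ 2 / 2 := by
  have hF₁ : EqOn (fun u => ∫ v in 0..2 * k + 1 - u, g u v ^ 2)
      (fun u => 2 * k ^ 3 / 3 + k ^ 2 * (1 - u)) (Icc 0 1) := fun u hu => by
    have := (h₁ u hu).integral_sq hk (by linarith [hu.2])
    rw [show k + (k + 1 - u) = 2 * k + 1 - u by ring] at this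
    simp only [this]; ring
  have hF₂ : EqOn (fun u => ∫ v in 0..2 * k + 1 - u, g u v ^ 2)
      (fun u => (fun w => 2 * w ^ 3 / 3 + w ^ 2 * (k - w)) (k + 1 - u)) (Icc 1 (k + 1)) :=
    fun u hu => by
    have := (h₂ u hu).integral_sq (by linarith [hu.2]) (by linarith [hu.1])
    rw [show k + 1 - u + k = 2 * k + 1 - u by ring] at this
    simp only [this]
  rw [integral_eq_add_of_eqOn_Icc zero_le_one (by linarith) (by fun_prop) (by fun_prop) hF₁ hF₂,
    integral_comp_sub_left (fun w => 2 * w ^ 3 / 3 + w ^ 2 * (k - w))]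
  simp (disch := exact Continuous.intervalIntegrable (by fun_prop) _ _) only
    [intervalIntegral.integral_add, intervalIntegral.integral_sub, intervalIntegral.integral_div,
     intervalIntegral.integral_const_mul, intervalIntegral.integral_mul_const, integral_pow,
     intervalIntegral.integral_const_mul _ (fun x => x), intervalIntegral.integral_const,
     integral_id, smul_eq_mul, mul_sub, ← pow_succ, sub_self]
  ring

theorem stmt_4_general (c : ℝ) (hc1 : c < 1) (g : ℝ → ℝ → ℝ)
    (hg1 : ∀ u v, 0 ≤ u → u ≤ 1 → 0 ≤ v → v ≤ 2 - 2*c → g u v = v)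
    (hg2 : ∀ u v, 0 ≤ u → u ≤ 1 → 2 - 2*c ≤ v → v ≤ 3 - 2*c - u → g u v = 2 - 2*c)
    (hg3 : ∀ u v, 0 ≤ u → u ≤ 1 → 3 - 2*c - u ≤ v → v ≤ 5 - 4*c - u →
      g u v = 5 - 4*c - u - v)
    (hg4 : ∀ u v, 1 ≤ u → u ≤ 3 - 2*c → 0 ≤ v → v ≤ 3 - 2*c - u → g u v = v)
    (hg5 : ∀ u v, 1 ≤ u → u ≤ 3 - 2*c → 3 - 2*c - u ≤ v → v ≤ 2 - 2*c →
      g u v = 3 - 2*c - u)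
    (hg6 : ∀ u v, 1 ≤ u → u ≤ 3 - 2*c → 2 - 2*c ≤ v → v ≤ 5 - 4*c - u →
      g u v = 5 - 4*c - u - v) :
    (3 / (6 * (1 - c) * (3 - 2*c)^2)) *
      (∫ u in (0:ℝ)..(3 - 2*c), ∫ v in (0:ℝ)..(5 - 4*c - u), (g u v)^2) =
    1 - c - 2 * (5 - 3*c) * (1 - c)^2 / (3 * (3 - 2*c)^2) := by
  have h₁ : ∀ u ∈ Icc (0 : ℝ) 1, IsTrapezoid (g u) (2 - 2*c) (2 - 2*c + 1 - u) :=
    fun u ⟨hu₀, hu₁⟩ => ⟨fun v hv => hg1 u v hu₀ hu₁ hv.1 hv.2,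
      fun v hv => hg2 u v hu₀ hu₁ hv.1 (by linarith [hv.2]),
      fun v hv => by rw [hg3 u v hu₀ hu₁ (by linarith [hv.1]) (by linarith [hv.2])]; ring⟩
  have h₂ : ∀ u ∈ Icc (1 : ℝ) (2 - 2*c + 1), IsTrapezoid (g u) (2 - 2*c + 1 - u) (2 - 2*c) :=
    fun u ⟨hu₁, hu₂⟩ => ⟨fun v hv => hg4 u v hu₁ (by linarith [hu₂]) hv.1 (by linarith [hv.2]),
      fun v hv => by rw [hg5 u v hu₁ (by linarith) (by linarith [hv.1]) hv.2]; ring,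
      fun v hv => by rw [hg6 u v hu₁ (by linarith) hv.1 (by linarith [hv.2])]; ring⟩
  have key : ∫ u in (0:ℝ)..(3 - 2*c), ∫ v in (0:ℝ)..(5 - 4*c - u), g u v ^ 2 =
      (2 - 2*c) ^ 4 / 4 + 2 * (2 - 2*c) ^ 3 / 3 + (2 - 2*c) ^ 2 / 2 := by
    convert integral_integral_sq_of_isTrapezoid (by linarith) h₁ h₂ using 4 <;> ring
  have : 0 < 1 - c := by linarith
  have : 0 < 3 - 2*c := by linarith
  rw [key, eq_sub_iff_add_eq, div_mul_eq_mul_div, div_add_div _ _ (by positivity) (by positivity),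
    div_eq_iff (by positivity)]
  ring

theorem stmt_4 (c : ℝ) (hc0 : 0 < c) (hc1 : c < 1) (g : ℝ → ℝ → ℝ)
    (hg1 : ∀ u v, 0 ≤ u → u ≤ 1 → 0 ≤ v → v ≤ 2 - 2*c → g u v = v)
    (hg2 : ∀ u v, 0 ≤ u → u ≤ 1 → 2 - 2*c ≤ v → v ≤ 3 - 2*c - u → g u v = 2 - 2*c)
    (hg3 : ∀ u v, 0 ≤ u → u ≤ 1 → 3 - 2*c - u ≤ v → v ≤ 5 - 4*c - u →
      g u v = 5 - 4*c - u - v)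
    (hg4 : ∀ u v, 1 ≤ u → u ≤ 3 - 2*c → 0 ≤ v → v ≤ 3 - 2*c - u → g u v = v)
    (hg5 : ∀ u v, 1 ≤ u → u ≤ 3 - 2*c → 3 - 2*c - u ≤ v → v ≤ 2 - 2*c →
      g u v = 3 - 2*c - u)
    (hg6 : ∀ u v, 1 ≤ u → u ≤ 3 - 2*c → 2 - 2*c ≤ v → v ≤ 5 - 4*c - u →
      g u v = 5 - 4*c - u - v) :
    (3 / (6 * (1 - c) * (3 - 2*c)^2)) *
      (∫ u in (0:ℝ)..(3 - 2*c), ∫ v in (0:ℝ)..(5 - 4*c - u), (g u v)^2) =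
    1 - c - 2 * (5 - 3*c) * (1 - c)^2 / (3 * (3 - 2*c)^2) :=
  stmt_4_general c hc1 g hg1 hg2 hg3 hg4 hg5 hg6
end

section
/- Fix a real number c with 0 < c ≤ 1/2, and define g: [0,3-2c] × ℝ_{≥0} → ℝ by: g(u,v) = v/2 if 0 ≤ v ≤ 3-2c-u; g(u,v) = (3-u-2c)/2 if 3-2c-u ≤ v ≤ 4-4c; g(u,v) = (7-6c-u-v)/2 if 4-4c ≤ v ≤ 7-6c-u. Then (3/(6(1-c)(3-2c)^2)) * ∫_0^{3-2c} ∫_0^{7-6c-u} g(u,v)^2 dv du = 1 - c - (68c^2 - 124c + 57)/(96(1-c)). -/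
/-!
For fixed `u`, put `w = 3 - 2c - u`. Then `v ↦ g u v` is a trapezoid: it rises with slope `1/2`
to height `w/2` on `[0, w]`, stays there on `[w, 4 - 4c]` and falls back to `0` on
`[4 - 4c, 4 - 4c + w]`. Hence `∫ g(u,v)² dv = 2·w³/12 + (w/2)²(4 - 4c - w) = (1 - c)w² - w³/12`,
and integrating over `w ∈ [0, 3 - 2c]` gives `(1 - c)(3 - 2c)³/3 - (3 - 2c)⁴/48`.
-/

open MeasureTheory Set

theorem intervalIntegral.integral_eq_add_add_of_eqOn {f f₁ f₂ f₃ : ℝ → ℝ} {a b c d : ℝ}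
    (e₁ : EqOn f f₁ (uIcc a b)) (e₂ : EqOn f f₂ (uIcc b c)) (e₃ : EqOn f f₃ (uIcc c d))
    (h₁ : IntervalIntegrable f₁ volume a b) (h₂ : IntervalIntegrable f₂ volume b c)
    (h₃ : IntervalIntegrable f₃ volume c d) :
    ∫ x in a..d, f x = (∫ x in a..b, f₁ x) + (∫ x in b..c, f₂ x) + ∫ x in c..d, f₃ x := by
  have i₁ : IntervalIntegrable f volume a b := h₁.congr fun x hx => (e₁ (uIoc_subset_uIcc hx)).symm
  have i₂ : IntervalIntegrable f volume b c := h₂.congr fun x hx => (e₂ (uIoc_subset_uIcc hx)).symm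
  have i₃ : IntervalIntegrable f volume c d := h₃.congr fun x hx => (e₃ (uIoc_subset_uIcc hx)).symm
  rw [← integral_add_adjacent_intervals (i₁.trans i₂) i₃, ← integral_add_adjacent_intervals i₁ i₂,
    integral_congr e₁, integral_congr e₂, integral_congr e₃]

theorem integral_half_sq (a b : ℝ) : ∫ x in a..b, (x / 2) ^ 2 = (b ^ 3 - a ^ 3) / 12 := by
  simp only [div_pow, intervalIntegral.integral_div, integral_pow]
  ring

theorem integral_sub_half_sq (d a b : ℝ) :
    ∫ x in a..b, ((d - x) / 2) ^ 2 = ((d - a) ^ 3 - (d - b) ^ 3) / 12 := by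
  rw [intervalIntegral.integral_comp_sub_left (fun x => (x / 2) ^ 2), integral_half_sq]

theorem integral_sq_of_trapezoid {f : ℝ → ℝ} {w p : ℝ} (hw : 0 ≤ w) (hwp : w ≤ p)
    (h_rise : ∀ v ∈ Icc 0 w, f v = v / 2) (h_flat : ∀ v ∈ Icc w p, f v = w / 2)
    (h_fall : ∀ v ∈ Icc p (p + w), f v = (p + w - v) / 2) :
    ∫ v in 0..p + w, f v ^ 2 = w ^ 3 / 6 + w ^ 2 * (p - w) / 4 := by
  rw [intervalIntegral.integral_eq_add_add_of_eqOn (f₁ := fun v => (v / 2) ^ 2)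
      (f₂ := fun _ => (w / 2) ^ 2) (f₃ := fun v => ((p + w - v) / 2) ^ 2)
      (fun v hv => by rw [h_rise v (by rwa [uIcc_of_le hw] at hv)])
      (fun v hv => by rw [h_flat v (by rwa [uIcc_of_le hwp] at hv)])
      (fun v hv => by rw [h_fall v (by rwa [uIcc_of_le (by linarith)] at hv)])
      ((by fun_prop : Continuous _).intervalIntegrable _ _) (intervalIntegrable_const)
      ((by fun_prop : Continuous _).intervalIntegrable _ _),
    integral_half_sq, intervalIntegral.integral_const, integral_sub_half_sq]
  simp only [smul_eq_mul]
  ring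

theorem stmt_5_general (c : ℝ) (hc1 : c ≤ 1/2) (g : ℝ → ℝ → ℝ)
    (hg1 : ∀ u v, 0 ≤ u → u ≤ 3 - 2*c → 0 ≤ v → v ≤ 3 - 2*c - u → g u v = v / 2)
    (hg2 : ∀ u v, 0 ≤ u → u ≤ 3 - 2*c → 3 - 2*c - u ≤ v → v ≤ 4 - 4*c →
      g u v = (3 - u - 2*c) / 2)
    (hg3 : ∀ u v, 0 ≤ u → u ≤ 3 - 2*c → 4 - 4*c ≤ v → v ≤ 7 - 6*c - u →
      g u v = (7 - 6*c - u - v) / 2) :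
    (3 / (6 * (1 - c) * (3 - 2*c)^2)) *
      (∫ u in (0:ℝ)..(3 - 2*c), ∫ v in (0:ℝ)..(7 - 6*c - u), (g u v)^2) =
    1 - c - (68*c^2 - 124*c + 57) / (96 * (1 - c)) := by
  have slice : EqOn (fun u => ∫ v in (0:ℝ)..(7 - 6*c - u), (g u v)^2)
      (fun u => (1 - c) * (3 - 2 * c - u) ^ 2 - (3 - 2 * c - u) ^ 3 / 12) (uIcc 0 (3 - 2 * c)) := by
    intro u hu
    obtain ⟨hu0, hu1⟩ : 0 ≤ u ∧ u ≤ 3 - 2 * c := by rwa [uIcc_of_le (by linarith)] at hu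
    dsimp only
    rw [show 7 - 6 * c - u = (4 - 4 * c) + (3 - 2 * c - u) by ring,
      integral_sq_of_trapezoid (by linarith) (by linarith)
        (fun v hv => hg1 u v hu0 hu1 hv.1 hv.2)
        (fun v hv => by rw [hg2 u v hu0 hu1 hv.1 hv.2]; ring)
        (fun v hv => by rw [hg3 u v hu0 hu1 hv.1 (by linarith [hv.2])]; ring)]
    ring
  have outer :
      ∫ u in (0:ℝ)..(3 - 2 * c), ((1 - c) * (3 - 2 * c - u) ^ 2 - (3 - 2 * c - u) ^ 3 / 12) =
        (1 - c) * (3 - 2 * c) ^ 3 / 3 - (3 - 2 * c) ^ 4 / 48 := by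
    rw [intervalIntegral.integral_comp_sub_left (fun w => (1 - c) * w ^ 2 - w ^ 3 / 12), sub_self,
      sub_zero]
    simp only [intervalIntegral.intervalIntegrable_pow, IntervalIntegrable.const_mul,
      IntervalIntegrable.div_const, intervalIntegral.integral_sub,
      intervalIntegral.integral_const_mul, integral_pow, intervalIntegral.integral_div]
    ring
  have h1c : (1:ℝ) - c ≠ 0 := by linarith
  have h32c : (3:ℝ) - 2 * c ≠ 0 := by linarith
  rw [intervalIntegral.integral_congr slice, outer]
  field_simp
  ring

theorem stmt_5 (c : ℝ) (hc0 : 0 < c) (hc1 : c ≤ 1/2) (g : ℝ → ℝ → ℝ)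
    (hg1 : ∀ u v, 0 ≤ u → u ≤ 3 - 2*c → 0 ≤ v → v ≤ 3 - 2*c - u → g u v = v / 2)
    (hg2 : ∀ u v, 0 ≤ u → u ≤ 3 - 2*c → 3 - 2*c - u ≤ v → v ≤ 4 - 4*c →
      g u v = (3 - u - 2*c) / 2)
    (hg3 : ∀ u v, 0 ≤ u → u ≤ 3 - 2*c → 4 - 4*c ≤ v → v ≤ 7 - 6*c - u →
      g u v = (7 - 6*c - u - v) / 2) :
    (3 / (6 * (1 - c) * (3 - 2*c)^2)) *
      (∫ u in (0:ℝ)..(3 - 2*c), ∫ v in (0:ℝ)..(7 - 6*c - u), (g u v)^2) =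
    1 - c - (68*c^2 - 124*c + 57) / (96 * (1 - c)) :=
  stmt_5_general c hc1 g hg1 hg2 hg3
end

section
/- Fix a real number c with 0 < c < 1, and define Q: [0,3-2c] × ℝ_{≥0} → ℝ as follows. For 0 ≤ u ≤ 2-2c: Q(u,v) = (4-4c)u - v^2 if 0 ≤ v ≤ u; Q(u,v) = u(4-4c+u-2v) if u ≤ v ≤ 2-2c; Q(u,v) = (2-2c+u-v)^2 if 2-2c ≤ v ≤ 2-2c+u. For 2-2c ≤ u ≤ 3-2c: Q(u,v) = (4-4c)u - v^2 if 0 ≤ v ≤ 2-2c; Q(u,v) = 4(1-c)(1-c+u-v) if 2-2c ≤ v ≤ u; Q(u,v) = (2-2c+u-v)^2 if u ≤ v ≤ 2-2c+u. Then (3/(6(1-c)(3-2c)^2)) * ∫_0^{3-2c} ∫_0^{2-2c+u} Q(u,v) dv du = 2 - (5/3)c. -/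
/-!
Write `a = 2 - 2c`. In both regimes `u ≤ a` and `a ≤ u` the inner integral is the same,
`∫₀^{a+u} Q(u,v) dv = a u (a + u)`, so the double integral is
`∫₀^{a+1} (a²u + a u²) du = a (a+1)² (5a+2) / 6`, while `6(1-c)(3-2c)² = 3a(a+1)²`.
The normalized value is `(5a+2)/6 = 2 - 5c/3`.
-/

open MeasureTheory Set intervalIntegral

lemma integral_quadratic (p q r x y : ℝ) :
    ∫ v in x..y, (p + q*v + r*v^2) = p*(y-x) + q*(y^2-x^2)/2 + r*(y^3-x^3)/3 := by
  have hp : IntervalIntegrable (fun _ : ℝ => p) volume x y := intervalIntegrable_const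
  have hq : IntervalIntegrable (fun v : ℝ => q*v) volume x y :=
    (continuous_const_mul q).intervalIntegrable x y
  have hr : IntervalIntegrable (fun v : ℝ => r*v^2) volume x y :=
    (continuous_const.mul (continuous_pow 2)).intervalIntegrable x y
  rw [integral_add (hp.add hq) hr, integral_add hp hq, intervalIntegral.integral_const,
    intervalIntegral.integral_const_mul, intervalIntegral.integral_const_mul, integral_id,
    integral_pow, smul_eq_mul]
  ring

lemma intervalIntegrable_and_integral_of_eqOn_quadratic {f : ℝ → ℝ} {p q r x y : ℝ}
    (hxy : x ≤ y) (h : ∀ v ∈ Icc x y, f v = p + q*v + r*v^2) :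
    IntervalIntegrable f volume x y ∧
      ∫ v in x..y, f v = p*(y-x) + q*(y^2-x^2)/2 + r*(y^3-x^3)/3 := by
  have h' : EqOn f (fun v => p + q*v + r*v^2) (uIcc x y) := by rwa [uIcc_of_le hxy]
  refine ⟨?_, by rw [integral_congr h', integral_quadratic]⟩
  exact (intervalIntegrable_congr (h'.mono uIoc_subset_uIcc)).mpr
    ((by continuity : Continuous fun v : ℝ => p + q*v + r*v^2).intervalIntegrable x y)

lemma integral_add_adjacent_intervals₃ {f : ℝ → ℝ} {x y z w : ℝ}
    (hxy : IntervalIntegrable f volume x y) (hyz : IntervalIntegrable f volume y z)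
    (hzw : IntervalIntegrable f volume z w) :
    ∫ v in x..w, f v = (∫ v in x..y, f v) + (∫ v in y..z, f v) + ∫ v in z..w, f v := by
  rw [← integral_add_adjacent_intervals hxy (hyz.trans hzw),
    ← integral_add_adjacent_intervals hyz hzw, add_assoc]

lemma integral_slice_of_le {f : ℝ → ℝ} {a u : ℝ} (hu : 0 ≤ u) (hua : u ≤ a)
    (h₁ : ∀ v ∈ Icc 0 u, f v = 2*a*u - v^2)
    (h₂ : ∀ v ∈ Icc u a, f v = u * (2*a + u - 2*v))
    (h₃ : ∀ v ∈ Icc a (a + u), f v = (a + u - v)^2) :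
    ∫ v in 0..a + u, f v = a*u*(a + u) := by
  obtain ⟨i₁, e₁⟩ := intervalIntegrable_and_integral_of_eqOn_quadratic
    (f := f) (p := 2*a*u) (q := 0) (r := -1) hu fun v hv => by rw [h₁ v hv]; ring
  obtain ⟨i₂, e₂⟩ := intervalIntegrable_and_integral_of_eqOn_quadratic
    (f := f) (p := u*(2*a + u)) (q := -2*u) (r := 0) hua fun v hv => by rw [h₂ v hv]; ring
  obtain ⟨i₃, e₃⟩ := intervalIntegrable_and_integral_of_eqOn_quadratic
    (f := f) (p := (a + u)^2) (q := -2*(a + u)) (r := 1) (le_add_of_nonneg_right hu)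
    fun v hv => by rw [h₃ v hv]; ring
  rw [integral_add_adjacent_intervals₃ i₁ i₂ i₃, e₁, e₂, e₃]
  ring

lemma integral_slice_of_ge {f : ℝ → ℝ} {a u : ℝ} (ha : 0 ≤ a) (hau : a ≤ u)
    (h₁ : ∀ v ∈ Icc 0 a, f v = 2*a*u - v^2)
    (h₂ : ∀ v ∈ Icc a u, f v = a * (a + 2*u - 2*v))
    (h₃ : ∀ v ∈ Icc u (a + u), f v = (a + u - v)^2) :
    ∫ v in 0..a + u, f v = a*u*(a + u) := by
  obtain ⟨i₁, e₁⟩ := intervalIntegrable_and_integral_of_eqOn_quadratic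
    (f := f) (p := 2*a*u) (q := 0) (r := -1) ha fun v hv => by rw [h₁ v hv]; ring
  obtain ⟨i₂, e₂⟩ := intervalIntegrable_and_integral_of_eqOn_quadratic
    (f := f) (p := a*(a + 2*u)) (q := -2*a) (r := 0) hau fun v hv => by rw [h₂ v hv]; ring
  obtain ⟨i₃, e₃⟩ := intervalIntegrable_and_integral_of_eqOn_quadratic
    (f := f) (p := (a + u)^2) (q := -2*(a + u)) (r := 1) (le_add_of_nonneg_left ha)
    fun v hv => by rw [h₃ v hv]; ring
  rw [integral_add_adjacent_intervals₃ i₁ i₂ i₃, e₁, e₂, e₃]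
  ring

theorem stmt_7_general (c : ℝ) (hc1 : c < 1) (Q : ℝ → ℝ → ℝ)
    (hQ1 : ∀ u v, 0 ≤ u → u ≤ 2 - 2*c → 0 ≤ v → v ≤ u → Q u v = (4 - 4*c)*u - v^2)
    (hQ2 : ∀ u v, 0 ≤ u → u ≤ 2 - 2*c → u ≤ v → v ≤ 2 - 2*c →
      Q u v = u * (4 - 4*c + u - 2*v))
    (hQ3 : ∀ u v, 0 ≤ u → u ≤ 2 - 2*c → 2 - 2*c ≤ v → v ≤ 2 - 2*c + u →
      Q u v = (2 - 2*c + u - v)^2)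
    (hQ4 : ∀ u v, 2 - 2*c ≤ u → u ≤ 3 - 2*c → 0 ≤ v → v ≤ 2 - 2*c →
      Q u v = (4 - 4*c)*u - v^2)
    (hQ5 : ∀ u v, 2 - 2*c ≤ u → u ≤ 3 - 2*c → 2 - 2*c ≤ v → v ≤ u →
      Q u v = 4 * (1 - c) * (1 - c + u - v))
    (hQ6 : ∀ u v, 2 - 2*c ≤ u → u ≤ 3 - 2*c → u ≤ v → v ≤ 2 - 2*c + u →
      Q u v = (2 - 2*c + u - v)^2) :
    (3 / (6 * (1 - c) * (3 - 2*c)^2)) *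
      (∫ u in (0:ℝ)..(3 - 2*c), ∫ v in (0:ℝ)..(2 - 2*c + u), Q u v) =
    2 - (5/3) * c := by
  have hslice : ∀ u ∈ Icc (0:ℝ) (3 - 2*c),
      ∫ v in (0:ℝ)..(2 - 2*c + u), Q u v = 0 + (2 - 2*c)^2*u + (2 - 2*c)*u^2 := by
    rintro u ⟨hu0, hu1⟩
    rcases le_total u (2 - 2*c) with hua | hau
    · rw [integral_slice_of_le hu0 hua (fun v hv => by rw [hQ1 u v hu0 hua hv.1 hv.2]; ring)
        (fun v hv => by rw [hQ2 u v hu0 hua hv.1 hv.2]; ring)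
        (fun v hv => by rw [hQ3 u v hu0 hua hv.1 hv.2])]
      ring
    · rw [integral_slice_of_ge (by linarith) hau
        (fun v hv => by rw [hQ4 u v hau hu1 hv.1 hv.2]; ring)
        (fun v hv => by rw [hQ5 u v hau hu1 hv.1 hv.2]; ring)
        (fun v hv => by rw [hQ6 u v hau hu1 hv.1 hv.2])]
      ring
  rw [(intervalIntegrable_and_integral_of_eqOn_quadratic (by linarith) hslice).2,
    div_mul_eq_mul_div, div_eq_iff (mul_ne_zero
      (mul_ne_zero (by norm_num) (sub_ne_zero.mpr hc1.ne')) (pow_ne_zero 2 (by linarith)))]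
  ring

theorem stmt_7 (c : ℝ) (hc0 : 0 < c) (hc1 : c < 1) (Q : ℝ → ℝ → ℝ)
    (hQ1 : ∀ u v, 0 ≤ u → u ≤ 2 - 2*c → 0 ≤ v → v ≤ u → Q u v = (4 - 4*c)*u - v^2)
    (hQ2 : ∀ u v, 0 ≤ u → u ≤ 2 - 2*c → u ≤ v → v ≤ 2 - 2*c →
      Q u v = u * (4 - 4*c + u - 2*v))
    (hQ3 : ∀ u v, 0 ≤ u → u ≤ 2 - 2*c → 2 - 2*c ≤ v → v ≤ 2 - 2*c + u →
      Q u v = (2 - 2*c + u - v)^2)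
    (hQ4 : ∀ u v, 2 - 2*c ≤ u → u ≤ 3 - 2*c → 0 ≤ v → v ≤ 2 - 2*c →
      Q u v = (4 - 4*c)*u - v^2)
    (hQ5 : ∀ u v, 2 - 2*c ≤ u → u ≤ 3 - 2*c → 2 - 2*c ≤ v → v ≤ u →
      Q u v = 4 * (1 - c) * (1 - c + u - v))
    (hQ6 : ∀ u v, 2 - 2*c ≤ u → u ≤ 3 - 2*c → u ≤ v → v ≤ 2 - 2*c + u →
      Q u v = (2 - 2*c + u - v)^2) :
    (3 / (6 * (1 - c) * (3 - 2*c)^2)) *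
      (∫ u in (0:ℝ)..(3 - 2*c), ∫ v in (0:ℝ)..(2 - 2*c + u), Q u v) =
    2 - (5/3) * c :=
  stmt_7_general c hc1 Q hQ1 hQ2 hQ3 hQ4 hQ5 hQ6
end

section
/- Define Q: [0,2] × ℝ_{≥0} → ℝ as follows. For 0 ≤ u ≤ 1: Q(u,v) = 2 - v^2 if 0 ≤ v ≤ 1; Q(u,v) = (2-v)^2 if 1 ≤ v ≤ 2. For 1 ≤ u ≤ 2: Q(u,v) = 4 - 2u - v^2 if 0 ≤ v ≤ 2-u; Q(u,v) = (2-u)(4-u-2v) if 2-u ≤ v ≤ 1; Q(u,v) = (3-u-v)^2 if 1 ≤ v ≤ 3-u. Then (1/3) * (∫_0^1 ∫_0^2 Q(u,v) dv du + ∫_1^2 ∫_0^{3-u} Q(u,v) dv du) = 17/18. -/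
/-!
For fixed `u`, `v ↦ Q u v` is piecewise quadratic, so each inner integral is a sum of
quadratic integrals: it equals `2` for `u ∈ [0, 1]` and `(2 - u) * (3 - u)` for `u ∈ [1, 2]`.
The outer integrals are then `2` and `5/6`, and `(2 + 5/6) / 3 = 17/18`.
-/

open MeasureTheory Set

theorem intervalIntegral.integral_quadratic (c₀ c₁ c₂ a b : ℝ) :
    ∫ x in a..b, (c₀ + c₁ * x + c₂ * x ^ 2) =
      (c₀ * b + c₁ * b ^ 2 / 2 + c₂ * b ^ 3 / 3) -
        (c₀ * a + c₁ * a ^ 2 / 2 + c₂ * a ^ 3 / 3) := by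
  have hint {h : ℝ → ℝ} (hh : Continuous h) : IntervalIntegrable h volume a b :=
    hh.intervalIntegrable a b
  rw [intervalIntegral.integral_add (hint (by fun_prop)) (hint (by fun_prop)),
    intervalIntegral.integral_add (hint (by fun_prop)) (hint (by fun_prop))]
  simp only [intervalIntegral.integral_const, intervalIntegral.integral_const_mul c₁ fun x => x,
    intervalIntegral.integral_const_mul, integral_id, integral_pow, smul_eq_mul]
  ring

theorem Set.eqOn_uIcc_of_le {α β : Type*} [LinearOrder α] {f g : α → β} {a b : α}
    (hab : a ≤ b) (h : ∀ x, a ≤ x → x ≤ b → f x = g x) : EqOn f g (uIcc a b) := by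
  intro x hx
  rw [uIcc_of_le hab] at hx
  exact h x hx.1 hx.2

section QuadraticPiece

variable {f : ℝ → ℝ} {a b c₀ c₁ c₂ : ℝ}

theorem intervalIntegrable_of_eqOn_quadratic
    (h : EqOn f (fun x => c₀ + c₁ * x + c₂ * x ^ 2) (uIcc a b)) :
    IntervalIntegrable f volume a b :=
  (ContinuousOn.congr (by fun_prop) h).intervalIntegrable

theorem integral_of_eqOn_quadratic
    (h : EqOn f (fun x => c₀ + c₁ * x + c₂ * x ^ 2) (uIcc a b)) :
    ∫ x in a..b, f x =
      (c₀ * b + c₁ * b ^ 2 / 2 + c₂ * b ^ 3 / 3) -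
        (c₀ * a + c₁ * a ^ 2 / 2 + c₂ * a ^ 3 / 3) := by
  rw [intervalIntegral.integral_congr h, intervalIntegral.integral_quadratic]

end QuadraticPiece

theorem integral_slice_of_le_one_s13 {g : ℝ → ℝ}
    (h₁ : ∀ v, 0 ≤ v → v ≤ 1 → g v = 2 - v ^ 2)
    (h₂ : ∀ v, 1 ≤ v → v ≤ 2 → g v = (2 - v) ^ 2) :
    ∫ v in (0 : ℝ)..2, g v = 2 := by
  have e₁ : EqOn g (fun v => 2 + 0 * v + (-1) * v ^ 2) (uIcc 0 1) :=
    eqOn_uIcc_of_le zero_le_one fun v h0 h1 => by rw [h₁ v h0 h1]; ring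
  have e₂ : EqOn g (fun v => 4 + (-4) * v + 1 * v ^ 2) (uIcc 1 2) :=
    eqOn_uIcc_of_le one_le_two fun v h0 h1 => by rw [h₂ v h0 h1]; ring
  rw [← intervalIntegral.integral_add_adjacent_intervals
      (intervalIntegrable_of_eqOn_quadratic e₁) (intervalIntegrable_of_eqOn_quadratic e₂),
    integral_of_eqOn_quadratic e₁, integral_of_eqOn_quadratic e₂]
  norm_num

theorem integral_slice_of_one_le_s13 {g : ℝ → ℝ} {u : ℝ} (hu₁ : 1 ≤ u) (hu₂ : u ≤ 2)
    (h₁ : ∀ v, 0 ≤ v → v ≤ 2 - u → g v = 4 - 2 * u - v ^ 2)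
    (h₂ : ∀ v, 2 - u ≤ v → v ≤ 1 → g v = (2 - u) * (4 - u - 2 * v))
    (h₃ : ∀ v, 1 ≤ v → v ≤ 3 - u → g v = (3 - u - v) ^ 2) :
    ∫ v in (0 : ℝ)..(3 - u), g v = (2 - u) * (3 - u) := by
  have e₁ : EqOn g (fun v => (4 - 2 * u) + 0 * v + (-1) * v ^ 2) (uIcc 0 (2 - u)) :=
    eqOn_uIcc_of_le (by linarith) fun v h0 h1 => by rw [h₁ v h0 h1]; ring
  have e₂ : EqOn g (fun v => (2 - u) * (4 - u) + (-2 * (2 - u)) * v + 0 * v ^ 2)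
      (uIcc (2 - u) 1) :=
    eqOn_uIcc_of_le (by linarith) fun v h0 h1 => by rw [h₂ v h0 h1]; ring
  have e₃ : EqOn g (fun v => (3 - u) ^ 2 + (-2 * (3 - u)) * v + 1 * v ^ 2) (uIcc 1 (3 - u)) :=
    eqOn_uIcc_of_le (by linarith) fun v h0 h1 => by rw [h₃ v h0 h1]; ring
  have i₁ := intervalIntegrable_of_eqOn_quadratic e₁
  have i₂ := intervalIntegrable_of_eqOn_quadratic e₂
  rw [← intervalIntegral.integral_add_adjacent_intervals (i₁.trans i₂)
      (intervalIntegrable_of_eqOn_quadratic e₃),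
    ← intervalIntegral.integral_add_adjacent_intervals i₁ i₂,
    integral_of_eqOn_quadratic e₁, integral_of_eqOn_quadratic e₂,
    integral_of_eqOn_quadratic e₃]
  ring

theorem stmt_13 (Q : ℝ → ℝ → ℝ)
    (hQ1 : ∀ u v, 0 ≤ u → u ≤ 1 → 0 ≤ v → v ≤ 1 → Q u v = 2 - v^2)
    (hQ2 : ∀ u v, 0 ≤ u → u ≤ 1 → 1 ≤ v → v ≤ 2 → Q u v = (2 - v)^2)
    (hQ3 : ∀ u v, 1 ≤ u → u ≤ 2 → 0 ≤ v → v ≤ 2 - u → Q u v = 4 - 2*u - v^2)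
    (hQ4 : ∀ u v, 1 ≤ u → u ≤ 2 → 2 - u ≤ v → v ≤ 1 → Q u v = (2 - u) * (4 - u - 2*v))
    (hQ5 : ∀ u v, 1 ≤ u → u ≤ 2 → 1 ≤ v → v ≤ 3 - u → Q u v = (3 - u - v)^2) :
    (1/3 : ℝ) * ((∫ u in (0:ℝ)..1, ∫ v in (0:ℝ)..2, Q u v) +
        ∫ u in (1:ℝ)..2, ∫ v in (0:ℝ)..(3 - u), Q u v) = 17/18 := by
  have lower : EqOn (fun u => ∫ v in (0 : ℝ)..2, Q u v) (fun u => 2 + 0 * u + 0 * u ^ 2)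
      (uIcc 0 1) :=
    eqOn_uIcc_of_le zero_le_one fun u h0 h1 => by
      rw [integral_slice_of_le_one_s13 (hQ1 u · h0 h1) (hQ2 u · h0 h1)]; ring
  have upper : EqOn (fun u => ∫ v in (0 : ℝ)..(3 - u), Q u v)
      (fun u => 6 + (-5) * u + 1 * u ^ 2) (uIcc 1 2) :=
    eqOn_uIcc_of_le one_le_two fun u h1 h2 => by
      rw [integral_slice_of_one_le_s13 h1 h2 (hQ3 u · h1 h2) (hQ4 u · h1 h2) (hQ5 u · h1 h2)]; ring
  rw [integral_of_eqOn_quadratic lower, integral_of_eqOn_quadratic upper]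
  norm_num
end

section
/- Let P = {(x₁,x₂,x₃) ∈ ℝ³ : -1 ≤ x₁ ≤ 0, -2 ≤ x₂, x₂ ≤ x₃, -1 ≤ x₃ ≤ 0}. Then the minimum over P of the linear functional 2x₁ + 4x₂ - x₃ equals -10, and 10 + (6/9) ∫_P (2x₁ + 4x₂ - x₃) dx₁dx₂dx₃ = 41/9. -/
/-!
The polytope is `[-1, 0] × T` with `T` the trapezoid `-1 ≤ z ≤ 0, -2 ≤ y ≤ z`. By Fubini,
integrating first in `y`, then in `z`, then in `x`, the integral of `2x + 4y - z` reduces to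
one-variable polynomial integrals: over `T` it is `3x - 20/3`, and `∫₋₁⁰ (3x - 20/3) dx = -49/6`,
so `10 + (6/9)(-49/6) = 41/9`. The minimum `-10` is attained at the vertex `(-1, -2, 0)`, where each
of `2x ≥ -2`, `4y ≥ -8`, `-z ≥ 0` is sharp.
-/

open MeasureTheory Set

section Fubini

variable {α β E : Type*} [MeasurableSpace α] [MeasurableSpace β]
  {μ : Measure α} {ν : Measure β} [SFinite μ] [SFinite ν] [NormedAddCommGroup E] [NormedSpace ℝ E]

theorem setIntegral_prod_symm_of_fibers {s : Set β} {t : β → Set α} {f : α × β → E}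
    (hs : MeasurableSet s) (hS : MeasurableSet {p : α × β | p.2 ∈ s ∧ p.1 ∈ t p.2})
    (hf : IntegrableOn f {p : α × β | p.2 ∈ s ∧ p.1 ∈ t p.2} (μ.prod ν)) :
    ∫ p in {p : α × β | p.2 ∈ s ∧ p.1 ∈ t p.2}, f p ∂μ.prod ν =
      ∫ y in s, ∫ x in t y, f (x, y) ∂μ ∂ν := by
  set S := {p : α × β | p.2 ∈ s ∧ p.1 ∈ t p.2}
  have fiber (y : β) :
      ∫ x, S.indicator f (x, y) ∂μ = s.indicator (fun y => ∫ x in t y, f (x, y) ∂μ) y := by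
    by_cases hy : y ∈ s
    · have hfiber : (·, y) ⁻¹' S = t y := by ext x; simp [S, hy]
      rw [indicator_of_mem hy, ← hfiber, ← integral_indicator (measurable_prodMk_right hS)]
      rfl
    · simp [S, hy]
  rw [← integral_indicator hS, integral_prod_symm _ ((integrable_indicator_iff hS).2 hf)]
  simp_rw [fiber]
  exact integral_indicator hs

end Fubini

theorem integral_Icc_eq_sub_of_hasDerivAt {E : Type*} [NormedAddCommGroup E] [NormedSpace ℝ E]
    [CompleteSpace E] {f F : ℝ → E} {a b : ℝ} (hab : a ≤ b)
    (hF : ∀ t, HasDerivAt F (f t) t) (hf : IntervalIntegrable f volume a b) :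
    ∫ t in Icc a b, f t = F b - F a := by
  rw [integral_Icc_eq_integral_Ioc, ← intervalIntegral.integral_of_le hab,
    intervalIntegral.integral_eq_sub_of_hasDerivAt (fun t _ => hF t) hf]

def trapezoid : Set (ℝ × ℝ) := {q | q.2 ∈ Icc (-1) 0 ∧ q.1 ∈ Icc (-2) q.2}

theorem measurableSet_trapezoid : MeasurableSet trapezoid := by
  simp only [trapezoid, mem_Icc]
  measurability

theorem trapezoid_subset_Icc : trapezoid ⊆ Icc (-2, -1) (0, 0) := by
  rintro ⟨y, z⟩ ⟨⟨hz₁, hz₂⟩, hy₁, hy₂⟩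
  exact ⟨⟨hy₁, hz₁⟩, hy₂.trans hz₂, hz₂⟩

theorem integral_trapezoid (x : ℝ) :
    ∫ q in trapezoid, (2 * x + 4 * q.1 - q.2) = 3 * x - 20 / 3 := by
  have inner (z : ℝ) (hz : -2 ≤ z) :
      ∫ y in Icc (-2) z, (2 * x + 4 * y - z) = (z + 2) * (2 * x - z) + 2 * z ^ 2 - 8 := by
    rw [integral_Icc_eq_sub_of_hasDerivAt (F := fun y => (2 * x - z) * y + 2 * y ^ 2) hz
      (fun y => (((hasDerivAt_id' y).const_mul _).add
        ((hasDerivAt_pow 2 y).const_mul 2)).congr_deriv (by ring))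
      ((by fun_prop : Continuous _).intervalIntegrable _ _)]
    ring
  have hint : IntegrableOn (fun q : ℝ × ℝ => 2 * x + 4 * q.1 - q.2) trapezoid
      (volume.prod volume) :=
    ((by fun_prop : Continuous _).integrableOn_Icc).mono_set trapezoid_subset_Icc
  rw [Measure.volume_eq_prod, trapezoid,
    setIntegral_prod_symm_of_fibers measurableSet_Icc measurableSet_trapezoid hint,
    setIntegral_congr_fun measurableSet_Icc fun z hz => inner z (by linarith [hz.1]),
    integral_Icc_eq_sub_of_hasDerivAt
      (F := fun z => z ^ 3 / 3 + (x - 1) * z ^ 2 + (4 * x - 8) * z) (by norm_num)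
      (fun z => ((((hasDerivAt_pow 3 z).div_const 3).add ((hasDerivAt_pow 2 z).const_mul _)).add
        ((hasDerivAt_id' z).const_mul _)).congr_deriv (by ring))
      ((by fun_prop : Continuous _).intervalIntegrable _ _)]
  ring

def polytope : Set (ℝ × ℝ × ℝ) := Icc (-1) 0 ×ˢ trapezoid

theorem polytope_eq : polytope =
    {p | -1 ≤ p.1 ∧ p.1 ≤ 0 ∧ -2 ≤ p.2.1 ∧ p.2.1 ≤ p.2.2 ∧ -1 ≤ p.2.2 ∧ p.2.2 ≤ 0} := by
  ext ⟨x, y, z⟩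
  simp only [polytope, trapezoid, mem_prod, mem_ofPred_eq, mem_Icc]
  tauto

theorem integral_polytope : ∫ p in polytope, (2 * p.1 + 4 * p.2.1 - p.2.2) = -49 / 6 := by
  have hint : IntegrableOn (fun p : ℝ × ℝ × ℝ => 2 * p.1 + 4 * p.2.1 - p.2.2)
      (Icc (-1) 0 ×ˢ trapezoid) (volume.prod volume) :=
    ((by fun_prop : Continuous _).integrableOn_Icc).mono_set
      (prod_mono_right trapezoid_subset_Icc |>.trans (Icc_prod_Icc _ _ _ _).subset)
  rw [polytope, Measure.volume_eq_prod, setIntegral_prod _ hint]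
  simp_rw [integral_trapezoid]
  rw [integral_Icc_eq_sub_of_hasDerivAt (F := fun x => 3 * x ^ 2 / 2 - 20 / 3 * x) (by norm_num)
      (fun x => ((((hasDerivAt_pow 2 x).const_mul 3).div_const 2).sub
        ((hasDerivAt_id' x).const_mul _)).congr_deriv (by ring))
      ((by fun_prop : Continuous _).intervalIntegrable _ _)]
  norm_num

theorem isLeast_image_polytope :
    IsLeast ((fun p : ℝ × ℝ × ℝ => 2 * p.1 + 4 * p.2.1 - p.2.2) '' polytope) (-10) := by
  rw [polytope_eq]
  refine ⟨⟨(-1, -2, 0), by norm_num, by norm_num⟩, ?_⟩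
  rintro _ ⟨p, ⟨hx, -, hy, -, -, hz⟩, rfl⟩
  linarith

theorem stmt_16 :
    let P : Set (ℝ × ℝ × ℝ) :=
      {p | -1 ≤ p.1 ∧ p.1 ≤ 0 ∧ -2 ≤ p.2.1 ∧ p.2.1 ≤ p.2.2 ∧ -1 ≤ p.2.2 ∧ p.2.2 ≤ 0}
    IsLeast ((fun p : ℝ × ℝ × ℝ => 2 * p.1 + 4 * p.2.1 - p.2.2) '' P) (-10) ∧
    (10 : ℝ) + (6/9) * ∫ p in P, (2 * p.1 + 4 * p.2.1 - p.2.2) = 41/9 := by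
  intro P
  rw [show P = polytope from polytope_eq.symm]
  refine ⟨isLeast_image_polytope, ?_⟩
  rw [integral_polytope]
  norm_num
end
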